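/- Let D_S be the display poset of a regular abstract merge tree S with the pseudo-metric d, and let p = (a,t) with t not a critical value be such that for all small ε > 0 the preimage of p under S(t−ε ≤ t) and the preimage of S(t ≤ t+ε)(p) under S(t ≤ t+ε) are singletons. Define t_p (resp. t^p) as the largest critical value strictly below (resp. smallest critical value strictly above) p along the poset order, and U(p) = { q ∈ CA({p}) : h(q) < t^p } ∪ { q : p ∈ CA({q}), h(q) > t_p }. Then the restriction h|_{U(p)} : U(p) → (t_p, t^p) is a bijective isometry (hence a homeomorphism), where (t_p,t^p) carries the Euclidean metric. -/
import Mathlib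


/-- A persistent set: a functor from the poset `(ℝ, ≤)` to `Sets`. -/
structure PersistentSet where
  obj : ℝ → Type
  map : ∀ {s t : ℝ}, s ≤ t → obj s → obj t
  map_id : ∀ (t : ℝ) (x : obj t), map le_rfl x = x
  map_comp : ∀ {s t u : ℝ} (h₁ : s ≤ t) (h₂ : t ≤ u) (x : obj s),
    map h₂ (map h₁ x) = map (h₁.trans h₂) x

def IsMergeTreeCriticalSet (S : PersistentSet) (C : Finset ℝ) : Prop :=
  (∀ t : ℝ, (∀ c ∈ C, t < c) → IsEmpty (S.obj t)) ∧
  (∀ t : ℝ, (∀ c ∈ C, c < t) → ∃ x : S.obj t, ∀ y : S.obj t, y = x) ∧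
  (∀ (s t : ℝ) (h : s ≤ t), (∀ c ∈ C, c < s ∨ t < c) → Function.Bijective (S.map h))

/-- A (finite) abstract merge tree. -/
def IsAbstractMergeTree (S : PersistentSet) : Prop :=
  (∀ t : ℝ, Finite (S.obj t)) ∧ ∃ C : Finset ℝ, IsMergeTreeCriticalSet S C

/-- The display poset `D_S = ⋃_t S(t) × {t}`. -/
def Display (S : PersistentSet) : Type := Σ _t : ℝ, S.obj _t

/-- The partial order of the display poset: `(a,t) ≤ (b,t')` iff `t ≤ t'` and
`S(t ≤ t')(a) = b`.  The height of `p : Display S` is `p.1`. -/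
def DispLe (S : PersistentSet) (p q : Display S) : Prop :=
  ∃ h : p.1 ≤ q.1, S.map h p.2 = q.2

/-- The pseudo-distance `d((a,t),(b,t')) = (t̃ - t) + (t̃ - t')`, where `t̃` is the
infimum of the heights of common ancestors of the two points. -/
noncomputable def dDisp (S : PersistentSet) (p q : Display S) : ℝ :=
  2 * sInf {t : ℝ | ∃ r : Display S, DispLe S p r ∧ DispLe S q r ∧ r.1 = t} - p.1 - q.1

/-- `S` is regular: all topological changes happen *at* the critical values. -/
def RegularPS (S : PersistentSet) : Prop :=
  ∀ t : ℝ, ∃ ε > (0 : ℝ), ∀ (t' : ℝ) (h : t ≤ t'), t' < t + ε → Function.Bijective (S.map h)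

/-- The canonical neighborhood
`U(p) = { q ≥ p : h q < t^p } ∪ { q ≤ p : h q > t_p }` of a point `p` of the display
poset, where `tp = t_p` and `tup = t^p` are the adjacent critical heights. -/
def canonU (S : PersistentSet) (p : Display S) (tp tup : ℝ) : Set (Display S) :=
  {q | (DispLe S p q ∧ q.1 < tup) ∨ (DispLe S q p ∧ tp < q.1)}

lemma dispLe_refl (S : PersistentSet) (a : Display S) : DispLe S a a :=
  ⟨le_rfl, S.map_id a.1 a.2⟩

lemma dispLe_trans (S : PersistentSet) {a b c : Display S}
    (h1 : DispLe S a b) (h2 : DispLe S b c) : DispLe S a c := by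
  obtain ⟨h1, e1⟩ := h1; obtain ⟨h2, e2⟩ := h2
  refine ⟨h1.trans h2, ?_⟩
  rw [← e1, S.map_comp] at e2; exact e2

lemma dispLe_flip (S : PersistentSet) {a b : Display S}
    (h1 : DispLe S a b) (h2 : b.1 ≤ a.1) : DispLe S b a := by
  obtain ⟨t, x⟩ := a; obtain ⟨t', y⟩ := b
  obtain ⟨hle, he⟩ := h1
  have ht : t = t' := le_antisymm hle h2
  subst ht
  have hyx : y = x := he.symm.trans (S.map_id t x)
  exact ⟨le_rfl, by rw [hyx]; exact S.map_id t x⟩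

lemma bij_between (S : PersistentSet) {C : Finset ℝ} (hC : IsMergeTreeCriticalSet S C)
    {tp tup : ℝ} (hadj : ∀ c ∈ C, c ∉ Set.Ioo tp tup)
    {s t : ℝ} (h : s ≤ t) (hs : tp < s) (ht : t < tup) :
    Function.Bijective (S.map h) := by
  refine hC.2.2 s t h (fun c hc => ?_)
  have hni := hadj c hc
  simp only [Set.mem_Ioo, not_and, not_lt] at hni
  by_cases h' : c ≤ tp
  · left; linarith
  · right; push_neg at h'; have := hni h'; linarith

lemma canonU_comp (S : PersistentSet) {C : Finset ℝ} (hC : IsMergeTreeCriticalSet S C)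
    {p : Display S} {tp tup : ℝ} (hadj : ∀ c ∈ C, c ∉ Set.Ioo tp tup)
    (h₁ : tp < p.1) (h₂ : p.1 < tup)
    {q r : Display S} (hq : q ∈ canonU S p tp tup) (hr : r ∈ canonU S p tp tup)
    (hle : q.1 ≤ r.1) : DispLe S q r := by
  rcases hq with ⟨hpq, hq2⟩ | ⟨hqp, hq2⟩ <;> rcases hr with ⟨hpr, hr2⟩ | ⟨hrp, hr2⟩
  · obtain ⟨hq1, eq⟩ := hpq; obtain ⟨hr1, er⟩ := hpr
    exact ⟨hle, by rw [← eq, S.map_comp]; exact er⟩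
  · have hq1 : q.1 ≤ p.1 := hle.trans hrp.1
    have hr1 : p.1 ≤ r.1 := hpq.1.trans hle
    exact dispLe_trans S (dispLe_flip S hpq hq1) (dispLe_flip S hrp hr1)
  · exact dispLe_trans S hqp hpr
  · obtain ⟨hr1, er⟩ := hrp
    have hinj := (bij_between S hC hadj hr1 hr2 h₂).1
    refine ⟨hle, hinj ?_⟩
    rw [S.map_comp, er]
    exact hqp.2

lemma canonU_sInf (S : PersistentSet) {C : Finset ℝ} (hC : IsMergeTreeCriticalSet S C)
    {p : Display S} {tp tup : ℝ} (hadj : ∀ c ∈ C, c ∉ Set.Ioo tp tup)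
    (h₁ : tp < p.1) (h₂ : p.1 < tup)
    {q r : Display S} (hq : q ∈ canonU S p tp tup) (hr : r ∈ canonU S p tp tup)
    (hle : q.1 ≤ r.1) :
    sInf {t : ℝ | ∃ s : Display S, DispLe S q s ∧ DispLe S r s ∧ s.1 = t} = r.1 := by
  have hmem : r.1 ∈ {t : ℝ | ∃ s : Display S, DispLe S q s ∧ DispLe S r s ∧ s.1 = t} :=
    ⟨r, canonU_comp S hC hadj h₁ h₂ hq hr hle, dispLe_refl S r, rfl⟩
  have hlb : ∀ t ∈ {t : ℝ | ∃ s : Display S, DispLe S q s ∧ DispLe S r s ∧ s.1 = t},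
      r.1 ≤ t := by
    rintro t ⟨s, _, h2, h3⟩
    exact h3 ▸ h2.1
  exact le_antisymm (csInf_le ⟨r.1, hlb⟩ hmem) (le_csInf ⟨r.1, hmem⟩ hlb)

/-- on `U(p)` the height function restricts to a bijection onto the open
interval `(t_p, t^p)` which is an isometry (hence a homeomorphism) for the
pseudo-metric `dDisp` and the Euclidean metric. -/
theorem height_bijOn_isometry_canonU (S : PersistentSet)
    (hS : IsAbstractMergeTree S) (hreg : RegularPS S)
    (C : Finset ℝ) (hC : IsMergeTreeCriticalSet S C)
    (p : Display S) (tp tup : ℝ)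
    (htp : tp ∈ C) (htup : tup ∈ C) (h₁ : tp < p.1) (h₂ : p.1 < tup)
    (hnotcrit : p.1 ∉ C)
    (hadj : ∀ c ∈ C, c ∉ Set.Ioo tp tup)
    (hloc : ∃ K > (0 : ℝ), ∀ (ε : ℝ) (hε : 0 < ε) (hεK : ε < K),
      (∀ x y : S.obj (p.1 - ε),
        S.map (by linarith : p.1 - ε ≤ p.1) x = p.2 →
        S.map (by linarith : p.1 - ε ≤ p.1) y = p.2 → x = y) ∧
      (∀ x : S.obj p.1,
        S.map (by linarith : p.1 ≤ p.1 + ε) x =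
          S.map (by linarith : p.1 ≤ p.1 + ε) p.2 → x = p.2)) :
    Set.BijOn (fun q : Display S => q.1) (canonU S p tp tup) (Set.Ioo tp tup) ∧
    (∀ q ∈ canonU S p tp tup, ∀ r ∈ canonU S p tp tup,
      dDisp S q r = |q.1 - r.1|) := by
  have hMapsTo : Set.MapsTo (fun q : Display S => q.1) (canonU S p tp tup)
      (Set.Ioo tp tup) := by
    rintro q (⟨hpq, hq2⟩ | ⟨hqp, hq2⟩)
    · exact ⟨lt_of_lt_of_le h₁ hpq.1, hq2⟩
    · exact ⟨hq2, lt_of_le_of_lt hqp.1 h₂⟩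
  refine ⟨⟨hMapsTo, ?_, ?_⟩, ?_⟩
  · -- InjOn
    intro q hq r hr heq
    rcases le_total q.1 r.1 with hle | hle
    · obtain ⟨hle', he⟩ := canonU_comp S hC hadj h₁ h₂ hq hr hle
      obtain ⟨t, x⟩ := q; obtain ⟨t', y⟩ := r
      simp only at heq
      subst heq
      have hxy : x = y := (S.map_id t x).symm.trans he
      rw [hxy]
    · obtain ⟨hle', he⟩ := canonU_comp S hC hadj h₁ h₂ hr hq hle
      obtain ⟨t, x⟩ := q; obtain ⟨t', y⟩ := r
      simp only at heq
      subst heq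
      have hxy : y = x := (S.map_id t y).symm.trans he
      rw [hxy]
  · -- SurjOn
    rintro t ⟨ht1, ht2⟩
    rcases le_total p.1 t with hle | hle
    · exact ⟨⟨t, S.map hle p.2⟩, Or.inl ⟨⟨hle, rfl⟩, ht2⟩, rfl⟩
    · obtain ⟨x, hx⟩ := (bij_between S hC hadj hle ht1 h₂).2 p.2
      exact ⟨⟨t, x⟩, Or.inr ⟨⟨hle, hx⟩, ht1⟩, rfl⟩
  · -- isometry
    intro q hq r hr
    unfold dDisp
    rcases le_total q.1 r.1 with hle | hle
    · rw [canonU_sInf S hC hadj h₁ h₂ hq hr hle, abs_of_nonpos (by linarith)]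
      ring
    · have hset : {t : ℝ | ∃ s : Display S, DispLe S q s ∧ DispLe S r s ∧ s.1 = t}
          = {t : ℝ | ∃ s : Display S, DispLe S r s ∧ DispLe S q s ∧ s.1 = t} := by
        ext t
        constructor <;> rintro ⟨s, ha, hb, hc⟩ <;> exact ⟨s, hb, ha, hc⟩
      rw [hset, canonU_sInf S hC hadj h₁ h₂ hr hq hle, abs_of_nonneg (by linarith)]
      ring
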